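/- arXiv:2511.18498 — 3 statements merged into one kernel-verified Lean document; each statement's English description precedes it below -/
import Mathlib

section
/- If a consumer receives shares from all N nodes, at most F of which are crafted (incorrect), and t > F with t ≤ N, then among any received collection the at-least N - F correct shares outnumber what is needed to detect inconsistency: there exist two subsets of size t whose reconstructions differ whenever at least one crafted share alters the reconstruction, i.e., the honest-majority shares determine a unique secret and any crafted share is detectable. -/
open Polynomial

lemma dexo_eq_of_agree {K : Type*} [Field K] {N t : ℕ}
    (x : Fin N → K) (hx : Function.Injective x)
    (p q : K[X]) (hp : p.degree < t) (hq : q.degree < t)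
    (S : Finset (Fin N)) (hcard : S.card = t)
    (hagree : ∀ i ∈ S, q.eval (x i) = p.eval (x i)) : q = p := by
  classical
  by_contra hne
  have hsub : q - p ≠ 0 := sub_ne_zero.mpr hne
  have hdeg : (q - p).degree < t := lt_of_le_of_lt (degree_sub_le _ _) (max_lt hq hp)
  have hnat : (q - p).natDegree < t := by
    have := (natDegree_lt_iff_degree_lt hsub).mpr (by simpa using hdeg)
    simpa using this
  have : q - p = 0 := by
    apply eq_zero_of_natDegree_lt_card_of_eval_eq_zero' (q - p) (S.image x)
    · intro a ha
      obtain ⟨i, hi, rfl⟩ := Finset.mem_image.mp ha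
      simp [hagree i hi]
    · rwa [Finset.card_image_of_injective _ hx, hcard]
  exact hsub this

/-- Honest-majority shares determine a unique secret and crafted shares are
detectable: with at most `F` incorrect shares, `F < t ≤ N - F`, (a) any
degree-`< t` polynomial agreeing with the shares on a `t`-subset of correct
indices has the same secret `p(0)` as the sharing polynomial `p`; (b) a
reconstruction set containing an incorrect share and `t - 1` correct shares
yields a polynomial different from `p`, enabling detection. -/
theorem dexo_crafted_share_detectable {K : Type*} [Field K]
    (N t F : ℕ) (hFt : F < t) (htNF : t ≤ N - F)
    (x : Fin N → K) (hx : Function.Injective x)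
    (p : K[X]) (hp : p.degree < t)
    (shares : Fin N → K)
    (C : Finset (Fin N))
    (hC : ∀ i ∈ C, shares i = p.eval (x i))
    (hF : (Finset.univ \ C).card ≤ F) :
    (∀ S ⊆ C, S.card = t → ∀ q : K[X], q.degree < t →
        (∀ i ∈ S, q.eval (x i) = shares i) → q.eval 0 = p.eval 0) ∧
      (∀ i : Fin N, shares i ≠ p.eval (x i) →
        ∀ S ⊆ C, S.card = t - 1 → i ∉ S →
          ∀ q : K[X], q.degree < t →
            (∀ j ∈ insert i S, q.eval (x j) = shares j) → q ≠ p) := by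
  constructor
  · intro S hSC hScard q hq hagree
    have : q = p := dexo_eq_of_agree x hx p q hp hq S hScard
      (fun i hi => by rw [hagree i hi, hC i (hSC hi)])
    rw [this]
  · intro i hi S hSC hScard hiS q hq hagree hqp
    apply hi
    rw [← hagree i (Finset.mem_insert_self i S), hqp]
end

section
/- In Shamir's (t,N)-secret sharing over a finite field K with |K| > N, for any secret s and any set of t - 1 share positions, the map from random polynomials (with constant term s and uniformly random higher coefficients) to the tuple of shares at those positions is a bijection onto K^{t-1}; hence any t - 1 shares are uniformly distributed independently of s, revealing no information about the secret. -/
open Polynomial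

/-- Perfect secrecy of Shamir sharing: over a finite field `K` with
`|K| > N`, for any secret `s` and any set `S` of `t - 1` share positions, the
map sending the random higher coefficients `(a₁, …, a_{t-1})` of
`p(X) = s + a₁ X + ⋯ + a_{t-1} X^{t-1}` to the tuple of shares `(p(xᵢ))_{i∈S}`
is a bijection (onto `K^{t-1}`), so any `t - 1` shares are uniform and
independent of `s`. -/
theorem shamir_secrecy_bijection {K : Type*} [Field K] [Fintype K]
    (N t : ℕ) (ht : 1 ≤ t) (hK : N < Fintype.card K)
    (x : Fin N → K) (hx : Function.Injective x) (hx0 : ∀ i, x i ≠ 0)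
    (s : K) (S : Finset (Fin N)) (hS : S.card = t - 1) :
    Function.Bijective
      (fun (a : Fin (t - 1) → K) (i : S) =>
        (C s + ∑ k : Fin (t - 1), C (a k) * X ^ ((k : ℕ) + 1)).eval
          (x (i : Fin N))) := by
  rw [Fintype.bijective_iff_injective_and_card]
  constructor
  · intro a b hab
    classical
    set q : K[X] := ∑ k : Fin (t - 1), C (a k - b k) * X ^ ((k : ℕ) + 1) with hq
    have hqeq : q = (C s + ∑ k : Fin (t - 1), C (a k) * X ^ ((k : ℕ) + 1))
        - (C s + ∑ k : Fin (t - 1), C (b k) * X ^ ((k : ℕ) + 1)) := by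
      rw [hq, add_sub_add_left_eq_sub, ← Finset.sum_sub_distrib]
      congr 1
      funext k
      rw [C_sub, sub_mul]
    -- the set of roots
    set T : Finset K := insert 0 (S.image x) with hT
    have hTcard : T.card = t := by
      rw [hT, Finset.card_insert_of_notMem, Finset.card_image_of_injective _ hx, hS]
      · omega
      · simp only [Finset.mem_image, not_exists]
        intro i h
        exact hx0 i h.2
    have hqzero : q = 0 := by
      apply Polynomial.eq_zero_of_natDegree_lt_card_of_eval_eq_zero' q T
      · intro y hy
        rw [hT, Finset.mem_insert] at hy
        rcases hy with rfl | hy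
        · simp [hq, eval_finset_sum]
        · obtain ⟨i, hi, rfl⟩ := Finset.mem_image.mp hy
          have := congrFun hab ⟨i, hi⟩
          simp only at this
          rw [hqeq]
          simp only [eval_sub, this, sub_self]
      · rw [hTcard]
        calc q.natDegree ≤ t - 1 := by
              apply Polynomial.natDegree_sum_le_of_forall_le
              intro k _
              refine (Polynomial.natDegree_C_mul_le _ _).trans ?_
              simpa using Nat.succ_le_of_lt k.2
          _ < t := by omega
    funext k
    have hk : q.coeff ((k : ℕ) + 1) = 0 := by rw [hqzero]; simp
    rw [hq, Polynomial.finset_sum_coeff] at hk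
    simp only [Polynomial.coeff_C_mul, Polynomial.coeff_X_pow, add_left_inj, Fin.val_inj,
      mul_ite, mul_one, mul_zero] at hk
    rw [Finset.sum_ite_eq Finset.univ k (fun j => a j - b j)] at hk
    · simp only [Finset.mem_univ, if_true] at hk
      exact sub_eq_zero.mp hk
    
  · simp [hS]
end

section
/- Under the shared-key optimization with priority group size t - F and at most F compromised nodes, in every possible compromise pattern the number of shares leaked to a colluding consumer is at most max(F, t - 1) = t - 1 (when F < t), hence always below threshold t. -/
open Finset in
/-- Shared-key optimization, all compromise patterns: the leaked-share set is
`G ∪ (B \ G)` if some group node is compromised, and `B \ G` otherwise. With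
`|G| = t - F`, `|B| ≤ F`, and `1 ≤ F < t`, the number of leaked shares is at
most `max F (t - 1) = t - 1`, always below the threshold `t`. -/
theorem dexo_leak_bound (N F t : ℕ) (hF : 1 ≤ F) (hFt : F < t)
    (G B : Finset (Fin N)) (hG : G.card = t - F) (hB : B.card ≤ F) :
    max F (t - 1) = t - 1 ∧
      (if (B ∩ G).Nonempty then G ∪ (B \ G) else B \ G).card ≤ t - 1 := by
  constructor
  · exact max_eq_right (by omega)
  · split_ifs with h
    · have h1 : 1 ≤ (B ∩ G).card := Finset.card_pos.mpr h
      have h2 : (B \ G).card + (B ∩ G).card = B.card := Finset.card_sdiff_add_card_inter B G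
      have h3 : (G ∪ (B \ G)).card ≤ G.card + (B \ G).card := Finset.card_union_le _ _
      omega
    · have : (B \ G).card ≤ B.card := Finset.card_le_card (Finset.sdiff_subset)
      omega
end
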